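/- arXiv:1301.0496 — 2 statements merged into one kernel-verified Lean document; each statement's English description precedes it below -/
import Mathlib

section
/- For a triangle in the plane with vertices V0, V1, V2 and a point O not on any of the lines OVi or ViVj (so that all circumcenters involved exist), the area-weighted average of the circumcenters of the oriented triangles OV0V1, OV1V2, OV2V0 (weighted by signed areas) equals the circumcenter of triangle V0V1V2. -/
/-- 2×2 determinant of two plane vectors. -/
noncomputable def det2 (u v : ℝ × ℝ) : ℝ := u.1 * v.2 - u.2 * v.1

/-- Signed area of the oriented triangle `A B C`. -/
noncomputable def sarea (A B C : ℝ × ℝ) : ℝ := det2 (B - A) (C - A) / 2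

/-- Squared Euclidean distance in the plane. -/
noncomputable def sqd (P Q : ℝ × ℝ) : ℝ := (P.1 - Q.1) ^ 2 + (P.2 - Q.2) ^ 2

/-- `O` is equidistant from the three vertices `A`, `B`, `C`. -/
noncomputable def isCircumcenter (O A B C : ℝ × ℝ) : Prop := sqd O A = sqd O B ∧ sqd O A = sqd O C

/-!
Solving the two linear equations `|P - A|² = |P - B|²`, `|P - A|² = |P - C|²` by Cramer's rule
shows that `sarea A B C • P` is a polynomial `areaWeightedCircumcenter A B C` in the vertices.
This polynomial is additive over the fan of triangles `O Vᵢ Vᵢ₊₁`, exactly like the signed area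
itself, which gives the theorem after dividing by `sarea V0 V1 V2`.
-/

noncomputable def areaWeightedCircumcenter (A B C : ℝ × ℝ) : ℝ × ℝ :=
  let b := B.1 ^ 2 + B.2 ^ 2 - A.1 ^ 2 - A.2 ^ 2
  let c := C.1 ^ 2 + C.2 ^ 2 - A.1 ^ 2 - A.2 ^ 2
  ((b * (C.2 - A.2) - c * (B.2 - A.2)) / 4, (c * (B.1 - A.1) - b * (C.1 - A.1)) / 4)

theorem isCircumcenter.sarea_smul_eq {P A B C : ℝ × ℝ} (h : isCircumcenter P A B C) :
    sarea A B C • P = areaWeightedCircumcenter A B C := by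
  obtain ⟨hB, hC⟩ := h
  simp only [sqd] at hB hC
  ext <;> simp only [areaWeightedCircumcenter, sarea, det2, Prod.smul_fst, Prod.smul_snd,
    Prod.fst_sub, Prod.snd_sub, smul_eq_mul]
  · linear_combination (C.2 - A.2) / 4 * hB - (B.2 - A.2) / 4 * hC
  · linear_combination (B.1 - A.1) / 4 * hC - (C.1 - A.1) / 4 * hB

theorem areaWeightedCircumcenter_fan_add (O V0 V1 V2 : ℝ × ℝ) :
    areaWeightedCircumcenter O V0 V1 + areaWeightedCircumcenter O V1 V2
      + areaWeightedCircumcenter O V2 V0 = areaWeightedCircumcenter V0 V1 V2 := by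
  ext <;> simp only [areaWeightedCircumcenter, Prod.fst_add, Prod.snd_add] <;> ring

theorem stmt0_general (O V0 V1 V2 C01 C12 C20 C : ℝ × ℝ)
    (hA : sarea V0 V1 V2 ≠ 0)
    (hC01 : isCircumcenter C01 O V0 V1)
    (hC12 : isCircumcenter C12 O V1 V2)
    (hC20 : isCircumcenter C20 O V2 V0)
    (hC : isCircumcenter C V0 V1 V2) :
    (sarea V0 V1 V2)⁻¹ •
      (sarea O V0 V1 • C01 + sarea O V1 V2 • C12 + sarea O V2 V0 • C20) = C := by
  rw [hC01.sarea_smul_eq, hC12.sarea_smul_eq, hC20.sarea_smul_eq,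
    areaWeightedCircumcenter_fan_add, ← hC.sarea_smul_eq, inv_smul_smul₀ hA]

theorem stmt0 (O V0 V1 V2 C01 C12 C20 C : ℝ × ℝ)
    (hA : sarea V0 V1 V2 ≠ 0)
    (h01 : sarea O V0 V1 ≠ 0) (h12 : sarea O V1 V2 ≠ 0) (h20 : sarea O V2 V0 ≠ 0)
    (hC01 : isCircumcenter C01 O V0 V1)
    (hC12 : isCircumcenter C12 O V1 V2)
    (hC20 : isCircumcenter C20 O V2 V0)
    (hC : isCircumcenter C V0 V1 V2) :
    (sarea V0 V1 V2)⁻¹ •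
      (sarea O V0 V1 • C01 + sarea O V1 V2 • C12 + sarea O V2 V0 • C20) = C :=
  stmt0_general O V0 V1 V2 C01 C12 C20 C hA hC01 hC12 hC20 hC
end

section
/- The analytic function g(x) = x·f(arctan x) derived from a solution f of the center functional equation satisfies g(x) − x⁴ g(1/x) + g(0)(x⁴ − 1) = 0 for all x > 0, and every analytic solution of this relation is of the form g(x) = a0 + a1 x + a2 x² + a1 x³. -/
/-!
Specialising the functional equation at `(arctan x, 0, arctan x⁻¹)`, whose tangents are
`x, 0, 1/x`, gives `f (arctan x) = x² f (arctan x⁻¹)`, which is the inversion relation for `g`.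

Conversely, `h = g - g 0` satisfies `h x = x⁴ h x⁻¹`. The power series of `g` is entire, and by
the identity theorem the relation extends to `ℂ \ {0}`; so the entire extension is `O(|z|⁴)` at
infinity, and Cauchy's estimates kill every Taylor coefficient of order `> 4`. A quartic with
`h 0 = 0` and this symmetry is `a₁ x + a₂ x² + a₁ x³`.
-/

open Filter Set Topology Real Metric Finset Nat

lemma exists_differentiable_ofReal_eq {a : ℕ → ℝ} {g : ℝ → ℝ}
    (hsum : ∀ x : ℝ, HasSum (fun n => a n * x ^ n) (g x)) :
    ∃ G : ℂ → ℂ, Differentiable ℂ G ∧ ∀ x : ℝ, G x = g x := by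
  set p := FormalMultilinearSeries.ofScalars ℂ (fun n => (a n : ℂ))
  have hrad : p.radius = ⊤ := by
    refine p.radius_eq_top_of_summable_norm fun r => ?_
    simpa [p, FormalMultilinearSeries.ofScalars_norm, abs_of_nonneg r.coe_nonneg]
      using (hsum r).summable.abs
  have hp : HasFPowerSeriesOnBall p.sum p 0 ⊤ := hrad ▸ p.hasFPowerSeriesOnBall (by simp [hrad])
  refine ⟨p.sum, fun z => (hp.analyticAt_of_mem (by simp)).differentiableAt, fun x => ?_⟩
  have hx := hp.hasSum (y := x) (by simp)
  simp only [p, FormalMultilinearSeries.ofScalars_apply_eq, zero_add, smul_eq_mul] at hx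
  exact hx.unique (by exact_mod_cast Complex.hasSum_ofReal.mpr (hsum x))

lemma AnalyticOnNhd.eqOn_compl_zero_of_eq_on_pos {F H : ℂ → ℂ}
    (hF : AnalyticOnNhd ℂ F {0}ᶜ) (hH : AnalyticOnNhd ℂ H {0}ᶜ)
    (h : ∀ x : ℝ, 0 < x → F x = H x) : EqOn F H {0}ᶜ := by
  have hpre : IsPreconnected ({0}ᶜ : Set ℂ) :=
    (isConnected_compl_singleton_of_one_lt_rank (by simp) 0).isPreconnected
  have hlim : Tendsto (fun x : ℝ => (x : ℂ)) (𝓝[>] (1 : ℝ)) (𝓝[≠] 1) :=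
    tendsto_nhdsWithin_of_tendsto_nhds_of_eventually_within _
      (Complex.continuous_ofReal.continuousWithinAt.tendsto.trans (by simp))
      (eventually_nhdsWithin_of_forall fun x hx => by simpa using hx.ne')
  refine hF.eqOn_of_preconnected_of_frequently_eq hH hpre (by simp) (hlim.frequently ?_)
  have hpos : ∀ᶠ x : ℝ in 𝓝[>] 1, F x = H x :=
    eventually_nhdsWithin_of_forall fun x hx => h x (one_pos.trans hx)
  exact hpos.frequently

lemma exists_norm_le_pow_of_eq_pow_mul_inv {G : ℂ → ℂ} (hG : Continuous G) {d : ℕ}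
    (h : ∀ z ≠ 0, G z = z ^ d * G z⁻¹) :
    ∃ C, ∀ z, 1 ≤ ‖z‖ → ‖G z‖ ≤ C * ‖z‖ ^ d := by
  obtain ⟨C, hC⟩ := (isCompact_closedBall (0 : ℂ) 1).exists_bound_of_continuousOn hG.continuousOn
  refine ⟨C, fun z hz => ?_⟩
  have hz0 : z ≠ 0 := norm_pos_iff.mp (one_pos.trans_le hz)
  have hinv : ‖G z⁻¹‖ ≤ C := hC _ (by simpa using inv_le_one_of_one_le₀ hz)
  rw [h z hz0, norm_mul, norm_pow, mul_comm]
  gcongr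

lemma Differentiable.iteratedDeriv_eq_zero_of_norm_le_pow {G : ℂ → ℂ} (hG : Differentiable ℂ G)
    {C : ℝ} {d n : ℕ} (hC : ∀ z, 1 ≤ ‖z‖ → ‖G z‖ ≤ C * ‖z‖ ^ d) (hn : d < n) :
    iteratedDeriv n G 0 = 0 := by
  have hbound : ∀ R : ℝ, 1 ≤ R → ‖iteratedDeriv n G 0‖ ≤ n ! * C / R := by
    intro R hR
    have hR0 : 0 < R := one_pos.trans_le hR
    have hC0 : 0 ≤ C := by simpa using (norm_nonneg _).trans (hC 1 (by simp))
    calc ‖iteratedDeriv n G 0‖ ≤ n ! * (C * R ^ d) / R ^ n :=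
          Complex.norm_iteratedDeriv_le_of_forall_mem_sphere_norm_le n hR0 hG.diffContOnCl
            fun z hz => by
              have hzR : ‖z‖ = R := mem_sphere_zero_iff_norm.mp hz
              simpa [hzR] using hC z (hzR ▸ hR)
      _ ≤ n ! * C / R := by
          rw [div_le_div_iff₀ (by positivity) hR0]
          have : R ^ d * R ≤ R ^ n := by
            rw [← pow_succ]; exact pow_le_pow_right₀ hR hn
          calc (n ! : ℝ) * (C * R ^ d) * R = n ! * C * (R ^ d * R) := by ring
            _ ≤ n ! * C * R ^ n := by gcongr
  have hlim : Tendsto (fun R : ℝ => n ! * C / R) atTop (𝓝 0) :=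
    tendsto_const_nhds.div_atTop tendsto_id
  exact norm_le_zero_iff.mp (ge_of_tendsto hlim (eventually_atTop.mpr ⟨1, hbound⟩))

lemma Differentiable.eq_sum_range_of_iteratedDeriv_eq_zero {G : ℂ → ℂ} (hG : Differentiable ℂ G)
    {d : ℕ} (h : ∀ n, d < n → iteratedDeriv n G 0 = 0) (z : ℂ) :
    G z = ∑ n ∈ range (d + 1), (n ! : ℂ)⁻¹ * iteratedDeriv n G 0 * z ^ n := by
  rw [← Complex.taylorSeries_eq_of_entire' 0 z hG, sub_zero]
  refine tsum_eq_sum fun n hn => ?_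
  rw [h n (by simpa [Nat.lt_succ_iff] using hn), mul_zero, zero_mul]

lemma exists_eq_sum_range_of_eq_pow_mul_inv {h : ℝ → ℝ} {H : ℂ → ℂ} (hH : Differentiable ℂ H)
    (hHh : ∀ x : ℝ, H x = h x) {d : ℕ} (hrel : ∀ x : ℝ, 0 < x → h x = x ^ d * h x⁻¹) :
    ∃ p : ℕ → ℝ, ∀ x, h x = ∑ n ∈ range (d + 1), p n * x ^ n := by
  have hinv : AnalyticOnNhd ℂ (fun z => z ^ d * H z⁻¹) {0}ᶜ :=
    DifferentiableOn.analyticOnNhd (fun z hz => ((differentiableAt_pow d).mul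
      ((hH z⁻¹).comp z (differentiableAt_inv hz))).differentiableWithinAt) isOpen_compl_singleton
  have hrelℂ : ∀ z ≠ 0, H z = z ^ d * H z⁻¹ :=
    AnalyticOnNhd.eqOn_compl_zero_of_eq_on_pos (fun z _ => hH.analyticAt z) hinv
      fun x hx => by rw [← Complex.ofReal_inv, hHh, hHh, hrel x hx]; push_cast; rfl
  obtain ⟨C, hC⟩ := exists_norm_le_pow_of_eq_pow_mul_inv hH.continuous hrelℂ
  have htaylor := hH.eq_sum_range_of_iteratedDeriv_eq_zero
    fun n hn => hH.iteratedDeriv_eq_zero_of_norm_le_pow hC hn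
  refine ⟨fun n => ((n ! : ℂ)⁻¹ * iteratedDeriv n H 0).re, fun x => ?_⟩
  rw [← Complex.ofReal_re (h x), ← hHh, htaylor, Complex.re_sum]
  simp only [← Complex.ofReal_pow, Complex.re_mul_ofReal]

lemma eq_of_sum_range_five_of_eq_pow_four_mul_inv {h : ℝ → ℝ} {p : ℕ → ℝ}
    (hp : ∀ x, h x = ∑ n ∈ range 5, p n * x ^ n) (h0 : h 0 = 0)
    (hrel : ∀ x : ℝ, 0 < x → h x = x ^ 4 * h x⁻¹) (x : ℝ) :
    h x = p 1 * x + p 2 * x ^ 2 + p 1 * x ^ 3 := by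
  simp only [hp, sum_range_succ, sum_range_zero] at h0 hrel ⊢
  have h2 := hrel 2 two_pos
  have h3 := hrel 3 three_pos
  norm_num at h0 h2 h3
  have hp4 : p 4 = 0 := by linarith
  have hp3 : p 3 = p 1 := by linarith
  rw [h0, hp3, hp4]
  ring

theorem exists_eq_cubic_of_hasSum_of_inversion_relation {g : ℝ → ℝ} {a : ℕ → ℝ}
    (hsum : ∀ x : ℝ, HasSum (fun n => a n * x ^ n) (g x))
    (hrel : ∀ x : ℝ, 0 < x → g x - x ^ 4 * g (1 / x) + g 0 * (x ^ 4 - 1) = 0) :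
    ∃ a0 a1 a2 : ℝ, ∀ x : ℝ, g x = a0 + a1 * x + a2 * x ^ 2 + a1 * x ^ 3 := by
  obtain ⟨G, hG, hGg⟩ := exists_differentiable_ofReal_eq hsum
  have hrel' : ∀ x : ℝ, 0 < x → g x - g 0 = x ^ 4 * (g x⁻¹ - g 0) := fun x hx => by
    linear_combination (by simpa only [one_div] using hrel x hx :
      g x - x ^ 4 * g x⁻¹ + g 0 * (x ^ 4 - 1) = 0)
  obtain ⟨p, hp⟩ := exists_eq_sum_range_of_eq_pow_mul_inv (hG.sub_const (G 0))
    (fun x => by rw [hGg, ← Complex.ofReal_zero, hGg, Complex.ofReal_sub]) hrel'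
  refine ⟨g 0, p 1, p 2, fun x => ?_⟩
  linear_combination eq_of_sum_range_five_of_eq_pow_four_mul_inv hp (sub_self _) hrel' x

lemma apply_arctan_eq_sq_mul_apply_arctan_inv (f : ℝ → ℝ)
    (heq : ∀ α β γ : ℝ, α ∈ Set.Ico 0 (π / 2) → β ∈ Set.Ico 0 (π / 2) →
      γ ∈ Set.Ico 0 (π / 2) → α + β + γ = π / 2 →
      tan α + tan β ≠ 0 → tan β + tan γ ≠ 0 → tan γ + tan α ≠ 0 →
      (f α * tan α - f β * tan β) / (tan α + tan β) +
        (f β * tan β - f γ * tan γ) / (tan β + tan γ) +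
        (f γ * tan γ - f α * tan α) / (tan γ + tan α) = 0)
    {x : ℝ} (hx : 0 < x) : f (arctan x) = x ^ 2 * f (arctan x⁻¹) := by
  have hmem : ∀ {y : ℝ}, 0 < y → arctan y ∈ Ico 0 (π / 2) := fun hy =>
    ⟨arctan_nonneg.mpr hy.le, arctan_lt_pi_div_two _⟩
  have hsum : arctan x + 0 + arctan x⁻¹ = π / 2 := by rw [arctan_inv_of_pos hx]; ring
  have key := heq _ 0 _ (hmem hx) ⟨le_rfl, pi_div_two_pos⟩ (hmem (inv_pos.mpr hx)) hsum
  simp only [tan_arctan, tan_zero, add_zero, zero_add, mul_zero, sub_zero, zero_sub] at key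
  have key := key hx.ne' (inv_pos.mpr hx).ne' (by positivity)
  field_simp at key
  rw [one_div] at key
  linear_combination key

/-- The function `g(x) = x·f(arctan x)` derived from a solution `f` of the
center functional equation satisfies `g(x) − x⁴·g(1/x) + g(0)(x⁴−1) = 0` for
all `x > 0`, and every analytic solution of this relation has the form
`g(x) = a₀ + a₁x + a₂x² + a₁x³`. -/
theorem stmt13 (f g : ℝ → ℝ) (a : ℕ → ℝ)
    -- `g` is analytic, given by an (everywhere convergent) power series
    (hsum : ∀ x : ℝ, HasSum (fun n => a n * x ^ n) (g x))
    (hg : ∀ x : ℝ, g x = x * f (arctan x))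
    -- `f` solves the center functional equation
    (heq : ∀ α β γ : ℝ, α ∈ Set.Ico 0 (π / 2) → β ∈ Set.Ico 0 (π / 2) →
      γ ∈ Set.Ico 0 (π / 2) → α + β + γ = π / 2 →
      tan α + tan β ≠ 0 → tan β + tan γ ≠ 0 → tan γ + tan α ≠ 0 →
      (f α * tan α - f β * tan β) / (tan α + tan β) +
        (f β * tan β - f γ * tan γ) / (tan β + tan γ) +
        (f γ * tan γ - f α * tan α) / (tan γ + tan α) = 0) :
    (∀ x : ℝ, 0 < x → g x - x ^ 4 * g (1 / x) + g 0 * (x ^ 4 - 1) = 0) ∧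
      ∃ a0 a1 a2 : ℝ, ∀ x : ℝ, g x = a0 + a1 * x + a2 * x ^ 2 + a1 * x ^ 3 := by
  have hrel : ∀ x : ℝ, 0 < x → g x - x ^ 4 * g (1 / x) + g 0 * (x ^ 4 - 1) = 0 := by
    intro x hx
    rw [hg, hg, hg, one_div, apply_arctan_eq_sq_mul_apply_arctan_inv f heq hx]
    field_simp
    ring
  exact ⟨hrel, exists_eq_cubic_of_hasSum_of_inversion_relation hsum hrel⟩
end
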